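/- In the two-indicator logistic model (R, R' conditionally i.i.d. Bernoulli(logistic(ψ₀+ψ₁x)) given X, and X | R=1,R'=1 ~ N(μ,σ²)), the four conditional means satisfy μ₁₁ − μ₁₀ = μ₁₀ − μ₀₀ and μ₁₀ = μ₀₁, i.e., the means E[X|R=r,R'=r'] are equally spaced along an arithmetic progression with common difference ψ₁σ². -/

import Mathlib

open MeasureTheory Real

noncomputable def normalPDF (μ σ2 x : ℝ) : ℝ :=
  (Real.sqrt (2 * Real.pi * σ2))⁻¹ * Real.exp (-(x - μ)^2 / (2 * σ2))

noncomputable def logisticSel (ψ0 ψ1 x : ℝ) : ℝ :=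
  Real.exp (ψ0 + ψ1 * x) / (1 + Real.exp (ψ0 + ψ1 * x))

noncomputable def selWeight (ψ0 ψ1 : ℝ) (r x : ℝ) : ℝ :=
  if r = 1 then logisticSel ψ0 ψ1 x else 1 - logisticSel ψ0 ψ1 x

/-!
Write `η = ψ₀ + ψ₁x`. Since `1 - logistic η = logistic η · e^{-η}`, the unnormalised density of
`X` given `R = r, R' = r'` is the one for `(1,1)`, namely a multiple of the `N(μ, σ²)` density,
tilted by `e^{-kη}` with `k = 2 - r - r'`. Completing the square, a Gaussian density tilted by
`e^{bx}` is a multiple of the `N(μ + bσ², σ²)` density, so the conditional mean is `μ - kψ₁σ²`.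
-/

section normalPDF

variable {v : ℝ} (μ : ℝ)

theorem normalPDF_eq_gaussianPDFReal (hv : 0 ≤ v) :
    normalPDF μ v = ProbabilityTheory.gaussianPDFReal μ ⟨v, hv⟩ := rfl

theorem integral_normalPDF (hv : 0 < v) : ∫ x, normalPDF μ v x = 1 := by
  rw [normalPDF_eq_gaussianPDFReal μ hv.le]
  exact ProbabilityTheory.integral_gaussianPDFReal_eq_one μ
    fun h ↦ hv.ne' (congrArg NNReal.toReal h)

theorem integral_mul_normalPDF (hv : 0 < v) : ∫ x, x * normalPDF μ v x = μ := by
  have hv' : (⟨v, hv.le⟩ : NNReal) ≠ 0 := fun h ↦ hv.ne' (congrArg NNReal.toReal h)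
  conv_rhs => rw [← ProbabilityTheory.integral_id_gaussianReal (μ := μ) (v := ⟨v, hv.le⟩)]
  rw [ProbabilityTheory.integral_gaussianReal_eq_integral_smul hv',
    normalPDF_eq_gaussianPDFReal μ hv.le]
  simp_rw [smul_eq_mul, mul_comm]

theorem normalPDF_mul_exp (hv : 0 < v) (b x : ℝ) :
    normalPDF μ v x * exp (b * x) = exp (b * μ + b ^ 2 * v / 2) * normalPDF (μ + b * v) v x := by
  simp only [normalPDF]
  rw [mul_left_comm, mul_assoc, ← exp_add, ← exp_add]
  congr 2
  field_simp
  ring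

theorem integral_mul_div_integral_of_eq_mul_normalPDF_mul_exp {g : ℝ → ℝ} {c : ℝ} (hv : 0 < v)
    (hc : c ≠ 0) (b : ℝ) (hg : ∀ x, g x = c * (normalPDF μ v x * exp (b * x))) :
    ∫ x, x * (g x / ∫ y, g y) = μ + b * v := by
  set c' := c * exp (b * μ + b ^ 2 * v / 2)
  have hg' : ∀ x, g x = c' * normalPDF (μ + b * v) v x := fun x ↦ by
    rw [hg, normalPDF_mul_exp μ hv, mul_assoc]
  have hc' : c' ≠ 0 := mul_ne_zero hc (exp_pos _).ne'
  simp_rw [hg', integral_const_mul, integral_normalPDF _ hv, mul_one, mul_div_cancel_left₀ _ hc']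
  exact integral_mul_normalPDF _ hv

end normalPDF

theorem one_sub_logisticSel (ψ0 ψ1 x : ℝ) :
    1 - logisticSel ψ0 ψ1 x = logisticSel ψ0 ψ1 x * exp (-(ψ0 + ψ1 * x)) := by
  have : 0 < 1 + exp (ψ0 + ψ1 * x) := by positivity
  simp only [logisticSel, exp_neg]
  field_simp
  ring

theorem selWeight_one (ψ0 ψ1 x : ℝ) : selWeight ψ0 ψ1 1 x = logisticSel ψ0 ψ1 x := if_pos rfl

theorem selWeight_zero (ψ0 ψ1 x : ℝ) :
    selWeight ψ0 ψ1 0 x = logisticSel ψ0 ψ1 x * exp (-(ψ0 + ψ1 * x)) := by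
  rw [selWeight, if_neg zero_ne_one, one_sub_logisticSel]

theorem equally_spaced_means_general
    (f : ℝ → ℝ) (μ σ2 ψ0 ψ1 : ℝ) (hσ2 : 0 < σ2)
    (P : ℝ → ℝ → ℝ)
    (hP : ∀ r r', P r r' = ∫ x, selWeight ψ0 ψ1 r x * selWeight ψ0 ψ1 r' x * f x)
    (hPpos : ∀ r r', (r = 0 ∨ r = 1) → (r' = 0 ∨ r' = 1) → 0 < P r r')
    (hcond11 : ∀ x,
      selWeight ψ0 ψ1 1 x * selWeight ψ0 ψ1 1 x * f x / P 1 1 = normalPDF μ σ2 x)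
    (m : ℝ → ℝ → ℝ)
    (hm : ∀ r r', m r r' =
      ∫ x, x * (selWeight ψ0 ψ1 r x * selWeight ψ0 ψ1 r' x * f x / P r r')) :
    m 1 1 - m 1 0 = m 1 0 - m 0 0 ∧ m 1 0 = m 0 1 ∧ m 1 1 - m 1 0 = ψ1 * σ2 := by
  have hP11 : 0 < P 1 1 := hPpos 1 1 (.inr rfl) (.inr rfl)
  have hbase (x : ℝ) : logisticSel ψ0 ψ1 x ^ 2 * f x = P 1 1 * normalPDF μ σ2 x := by
    rw [← hcond11, selWeight_one, mul_div_cancel₀ _ hP11.ne', sq]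
  have hmean (r r' : ℝ) (k : ℕ) (hw : ∀ x, selWeight ψ0 ψ1 r x * selWeight ψ0 ψ1 r' x =
      logisticSel ψ0 ψ1 x ^ 2 * exp (-(ψ0 + ψ1 * x)) ^ k) : m r r' = μ - k * ψ1 * σ2 := by
    rw [hm, hP, integral_mul_div_integral_of_eq_mul_normalPDF_mul_exp μ hσ2
      (mul_ne_zero hP11.ne' (exp_pos (-(k * ψ0))).ne') (-(k * ψ1))]
    · ring
    intro x
    rw [hw, mul_right_comm, hbase, ← exp_nat_mul,
      show k * -(ψ0 + ψ1 * x) = -(k * ψ0) + -(k * ψ1) * x by ring, exp_add]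
    ring
  have h11 := hmean 1 1 0 fun x ↦ by simp only [selWeight_one]; ring
  have h10 := hmean 1 0 1 fun x ↦ by simp only [selWeight_one, selWeight_zero]; ring
  have h01 := hmean 0 1 1 fun x ↦ by simp only [selWeight_one, selWeight_zero]; ring
  have h00 := hmean 0 0 2 fun x ↦ by simp only [selWeight_zero]; ring
  push_cast at h11 h10 h01 h00
  refine ⟨?_, ?_, ?_⟩ <;> linarith

/-- in the two-indicator logistic model the four conditional means
`μ_{rr'} = E[X|R=r,R'=r']` are equally spaced: `μ₁₁ − μ₁₀ = μ₁₀ − μ₀₀` and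
`μ₁₀ = μ₀₁`, with common difference `ψ₁σ²`. -/
theorem equally_spaced_means
    (f : ℝ → ℝ) (μ σ2 ψ0 ψ1 : ℝ) (hσ2 : 0 < σ2)
    (hf_nonneg : ∀ x, 0 ≤ f x) (hf_meas : Measurable f) (hInt : Integrable f)
    (P : ℝ → ℝ → ℝ)
    (hP : ∀ r r', P r r' = ∫ x, selWeight ψ0 ψ1 r x * selWeight ψ0 ψ1 r' x * f x)
    (hPpos : ∀ r r', (r = 0 ∨ r = 1) → (r' = 0 ∨ r' = 1) → 0 < P r r')
    (hcond11 : ∀ x,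
      selWeight ψ0 ψ1 1 x * selWeight ψ0 ψ1 1 x * f x / P 1 1 = normalPDF μ σ2 x)
    (m : ℝ → ℝ → ℝ)
    (hm : ∀ r r', m r r' =
      ∫ x, x * (selWeight ψ0 ψ1 r x * selWeight ψ0 ψ1 r' x * f x / P r r')) :
    m 1 1 - m 1 0 = m 1 0 - m 0 0 ∧ m 1 0 = m 0 1 ∧ m 1 1 - m 1 0 = ψ1 * σ2 :=
  equally_spaced_means_general f μ σ2 ψ0 ψ1 hσ2 P hP hPpos hcond11 m hm
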